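/- Let L satisfy the standard convex OGD assumptions and consider a two-phase procedure: τ steps of gradient descent on a function L₁ with comparator θ₁* followed by T−τ steps on L₂ with comparator θ₂*, each phase individually satisfying the telescoped regret bound. Then the weighted average loss L̄ = (Σ_{t<T} η_t L_t)/(Σ_{t<T} η_t), where L_t is the loss of the function active at step t, satisfies L̄ ≤ [(Σ_{t<τ} η_t) L₁* + (Σ_{τ≤t<T} η_t) L₂*]/(Σ_{t<T} η_t) + [‖θ̃_0 − θ₁*‖² + ‖θ_τ − θ₂*‖²]/(2 Σ_{t<T} η_t) + G²(Σ_{t<T} η_t²)/(2 Σ_{t<T} η_t). -/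

import Mathlib

/-!
Each gradient step satisfies `η (L θ - L θ*) ≤ (‖θ - θ*‖² - ‖θ' - θ*‖²) / 2 + η² G² / 2`: the
first-order condition for convexity bounds `L θ - L θ*` by `⟪∇L θ, θ - θ*⟫`, and expanding
`‖θ - η ∇L θ - θ*‖²` turns that inner product into a difference of squared distances. Summed over
a phase the distances telescope; adding the two phases and dividing by `∑ η` gives the bound.
-/

open Finset

theorem ConvexOn.add_fderiv_sub_le {E : Type*} [NormedAddCommGroup E] [NormedSpace ℝ E]
    {s : Set E} {f : E → ℝ} {f' : E →L[ℝ] ℝ} {x : E} (hf : ConvexOn ℝ s f) (hx : x ∈ s)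
    (hf' : HasFDerivAt f f' x) {y : E} (hy : y ∈ s) :
    f x + f' (y - x) ≤ f y := by
  set ℓ := AffineMap.lineMap (k := ℝ) x y
  have hderiv : HasDerivAt (f ∘ ℓ) (f' (y - x)) 0 :=
    hf'.comp_hasDerivAt_of_eq 0 AffineMap.hasDerivAt_lineMap
      (AffineMap.lineMap_apply_zero x y).symm
  have hslope := (hf.comp_affineMap ℓ).le_slope_of_hasDerivAt (by simpa [ℓ]) (by simpa [ℓ])
    one_pos hderiv
  rw [slope_def_field] at hslope
  simp only [Function.comp_apply, ℓ, AffineMap.lineMap_apply_zero, AffineMap.lineMap_apply_one,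
    sub_zero, div_one] at hslope
  linarith

section GradientDescent

variable {E : Type*} [NormedAddCommGroup E] [InnerProductSpace ℝ E] [CompleteSpace E]
  {s : Set E} {f : E → ℝ}

theorem ConvexOn.add_inner_sub_le {g x : E} (hf : ConvexOn ℝ s f) (hx : x ∈ s)
    (hg : HasGradientAt f g x) {y : E} (hy : y ∈ s) :
    f x + inner ℝ g (y - x) ≤ f y :=
  hf.add_fderiv_sub_le hx hg.hasFDerivAt hy

theorem ConvexOn.mul_sub_le_of_gradient_step {g θ : E} {G η : ℝ} (hf : ConvexOn ℝ Set.univ f)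
    (hg : HasGradientAt f g θ) (hG : ‖g‖ ≤ G) (hη : 0 ≤ η) (θs : E) :
    η * (f θ - f θs) ≤ (‖θ - θs‖ ^ 2 - ‖θ - η • g - θs‖ ^ 2) / 2 + η ^ 2 * G ^ 2 / 2 := by
  have hfirst : f θ - f θs ≤ inner ℝ g (θ - θs) := by
    have := hf.add_inner_sub_le (Set.mem_univ θ) hg (Set.mem_univ θs)
    rw [← neg_sub, inner_neg_right] at this
    linarith
  have hexpand : ‖θ - η • g - θs‖ ^ 2
      = ‖θ - θs‖ ^ 2 - 2 * η * inner ℝ g (θ - θs) + η ^ 2 * ‖g‖ ^ 2 := by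
    rw [sub_right_comm, norm_sub_sq_real, real_inner_smul_right, real_inner_comm, norm_smul,
      mul_pow, Real.norm_eq_abs, sq_abs]
    ring
  have hgG : ‖g‖ ^ 2 ≤ G ^ 2 := pow_le_pow_left₀ (norm_nonneg g) hG 2
  rw [hexpand]
  linarith [mul_le_mul_of_nonneg_left hfirst hη, mul_le_mul_of_nonneg_left hgG (sq_nonneg η)]

theorem ConvexOn.sum_Ico_gradient_descent_le {g : E → E} {G : ℝ} {η : ℕ → ℝ} {θ : ℕ → E}
    {a b : ℕ} (hf : ConvexOn ℝ Set.univ f) (hg : ∀ x, HasGradientAt f (g x) x)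
    (hG : ∀ x, ‖g x‖ ≤ G) (hη : ∀ t, 0 ≤ η t) (hab : a ≤ b)
    (hθ : ∀ t, a ≤ t → t < b → θ (t + 1) = θ t - η t • g (θ t)) (θs : E) :
    ∑ t ∈ Ico a b, η t * f (θ t) ≤
      (∑ t ∈ Ico a b, η t) * f θs + ‖θ a - θs‖ ^ 2 / 2 + G ^ 2 / 2 * ∑ t ∈ Ico a b, η t ^ 2 := by
  set d : ℕ → ℝ := fun t => ‖θ t - θs‖ ^ 2 / 2
  have hstep : ∀ t ∈ Ico a b,
      η t * f (θ t) ≤ η t * f θs + (d t - d (t + 1)) + G ^ 2 / 2 * η t ^ 2 := by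
    intro t ht
    obtain ⟨hat, htb⟩ := mem_Ico.mp ht
    have := hf.mul_sub_le_of_gradient_step (hg (θ t)) (hG (θ t)) (hη t) θs
    simp only [d, hθ t hat htb]
    linarith
  have htelescope : ∑ t ∈ Ico a b, (d t - d (t + 1)) = d a - d b := by
    simpa only [neg_sub_neg] using sum_Ico_sub (fun t => -d t) hab
  calc ∑ t ∈ Ico a b, η t * f (θ t)
      ≤ ∑ t ∈ Ico a b, (η t * f θs + (d t - d (t + 1)) + G ^ 2 / 2 * η t ^ 2) := sum_le_sum hstep
    _ = (∑ t ∈ Ico a b, η t) * f θs + (d a - d b) + G ^ 2 / 2 * ∑ t ∈ Ico a b, η t ^ 2 := by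
        rw [sum_add_distrib, sum_add_distrib, htelescope, ← sum_mul, ← mul_sum]
    _ ≤ _ := by linarith [show 0 ≤ d b by positivity, show d a = ‖θ a - θs‖ ^ 2 / 2 from rfl]

end GradientDescent

theorem Finset.sum_range_ite_lt {M : Type*} [AddCommMonoid M] (u v : ℕ → M) {τ T : ℕ}
    (hτT : τ ≤ T) :
    ∑ t ∈ range T, (if t < τ then u t else v t) = ∑ t ∈ range τ, u t + ∑ t ∈ Ico τ T, v t := by
  rw [← sum_range_add_sum_Ico _ hτT]
  congr 1
  · exact sum_congr rfl fun t ht => if_pos (mem_range.mp ht)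
  · exact sum_congr rfl fun t ht => if_neg (not_lt.mpr (mem_Ico.mp ht).1)

theorem two_phase_bound_general {n : ℕ}
    (L₁ L₂ : EuclideanSpace ℝ (Fin n) → ℝ)
    (g₁ g₂ : EuclideanSpace ℝ (Fin n) → EuclideanSpace ℝ (Fin n))
    (hconv₁ : ConvexOn ℝ Set.univ L₁) (hconv₂ : ConvexOn ℝ Set.univ L₂)
    (hgrad₁ : ∀ θ, HasGradientAt L₁ (g₁ θ) θ)
    (hgrad₂ : ∀ θ, HasGradientAt L₂ (g₂ θ) θ)
    (G : ℝ) (hG₁ : ∀ θ, ‖g₁ θ‖ ≤ G) (hG₂ : ∀ θ, ‖g₂ θ‖ ≤ G)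
    (η : ℕ → ℝ) (hη : ∀ t, 0 < η t)
    (τ T : ℕ) (hτT : τ ≤ T)
    (φ ψ : ℕ → EuclideanSpace ℝ (Fin n))
    (hφ : ∀ t < τ, φ (t + 1) = φ t - η t • g₁ (φ t))
    (hψ : ∀ t, τ ≤ t → t < T → ψ (t + 1) = ψ t - η t • g₂ (ψ t))
    (θ₁star θ₂star : EuclideanSpace ℝ (Fin n)) :
    (∑ t ∈ range T, η t * (if t < τ then L₁ (φ t) else L₂ (ψ t))) / (∑ t ∈ range T, η t) ≤
      ((∑ t ∈ range τ, η t) * L₁ θ₁star + (∑ t ∈ Ico τ T, η t) * L₂ θ₂star)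
          / (∑ t ∈ range T, η t)
        + (‖φ 0 - θ₁star‖ ^ 2 + ‖ψ τ - θ₂star‖ ^ 2) / (2 * ∑ t ∈ range T, η t)
        + G ^ 2 * (∑ t ∈ range T, (η t) ^ 2) / (2 * ∑ t ∈ range T, η t) := by
  have hη' : ∀ t, 0 ≤ η t := fun t => (hη t).le
  have hphase₁ := hconv₁.sum_Ico_gradient_descent_le hgrad₁ hG₁ hη' τ.zero_le
    (fun t _ ht => hφ t ht) θ₁star
  have hphase₂ := hconv₂.sum_Ico_gradient_descent_le hgrad₂ hG₂ hη' hτT hψ θ₂star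
  rw [← range_eq_Ico] at hphase₁
  have hsq := sum_range_add_sum_Ico (fun t => η t ^ 2) hτT
  calc (∑ t ∈ range T, η t * (if t < τ then L₁ (φ t) else L₂ (ψ t))) / (∑ t ∈ range T, η t)
      ≤ ((∑ t ∈ range τ, η t) * L₁ θ₁star + (∑ t ∈ Ico τ T, η t) * L₂ θ₂star
          + (‖φ 0 - θ₁star‖ ^ 2 + ‖ψ τ - θ₂star‖ ^ 2) / 2
          + G ^ 2 / 2 * ∑ t ∈ range T, η t ^ 2) / (∑ t ∈ range T, η t) := by
        gcongr
        · exact sum_nonneg fun t _ => hη' t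
        · simp only [mul_ite, sum_range_ite_lt _ _ hτT]
          rw [← hsq, mul_add]
          linarith
    _ = _ := by ring

/-- Combined two-phase OGD bound: `τ` steps of gradient descent on `L₁`
followed by `T − τ` steps on `L₂` (starting from an expanded point `ψ τ`),
bounding the learning-rate-weighted average loss. -/
theorem two_phase_bound {n : ℕ}
    (L₁ L₂ : EuclideanSpace ℝ (Fin n) → ℝ)
    (g₁ g₂ : EuclideanSpace ℝ (Fin n) → EuclideanSpace ℝ (Fin n))
    (hconv₁ : ConvexOn ℝ Set.univ L₁) (hconv₂ : ConvexOn ℝ Set.univ L₂)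
    (hgrad₁ : ∀ θ, HasGradientAt L₁ (g₁ θ) θ)
    (hgrad₂ : ∀ θ, HasGradientAt L₂ (g₂ θ) θ)
    (G : ℝ) (hG₁ : ∀ θ, ‖g₁ θ‖ ≤ G) (hG₂ : ∀ θ, ‖g₂ θ‖ ≤ G)
    (η : ℕ → ℝ) (hη : ∀ t, 0 < η t)
    (τ T : ℕ) (hτT : τ ≤ T) (hT : 1 ≤ T)
    (φ ψ : ℕ → EuclideanSpace ℝ (Fin n))
    (hφ : ∀ t < τ, φ (t + 1) = φ t - η t • g₁ (φ t))
    (hψ : ∀ t, τ ≤ t → t < T → ψ (t + 1) = ψ t - η t • g₂ (ψ t))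
    (θ₁star θ₂star : EuclideanSpace ℝ (Fin n))
    (hmin₁ : ∀ θ, L₁ θ₁star ≤ L₁ θ) (hmin₂ : ∀ θ, L₂ θ₂star ≤ L₂ θ) :
    (∑ t ∈ range T, η t * (if t < τ then L₁ (φ t) else L₂ (ψ t))) / (∑ t ∈ range T, η t) ≤
      ((∑ t ∈ range τ, η t) * L₁ θ₁star + (∑ t ∈ Ico τ T, η t) * L₂ θ₂star)
          / (∑ t ∈ range T, η t)
        + (‖φ 0 - θ₁star‖ ^ 2 + ‖ψ τ - θ₂star‖ ^ 2) / (2 * ∑ t ∈ range T, η t)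
        + G ^ 2 * (∑ t ∈ range T, (η t) ^ 2) / (2 * ∑ t ∈ range T, η t) :=
  two_phase_bound_general L₁ L₂ g₁ g₂ hconv₁ hconv₂ hgrad₁ hgrad₂ G hG₁ hG₂ η hη τ T hτT φ ψ hφ hψ
    θ₁star θ₂star
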